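/- arXiv:1811.06810 — 2 statements merged into one kernel-verified Lean document; each statement's English description precedes it below -/
import Mathlib

section
/- There exist a finite join-semilattice R, a finite type X with exactly two elements, and a multi-valued selection function ε on X (with outcomes in R) such that ε is upwards closed but not witnessing. (Concretely one may take R = {⊤, ⊥₁, ⊥₂} with ⊥₁ ≤ ⊤, ⊥₂ ≤ ⊤ and ⊥₁, ⊥₂ incomparable, X = {0, ⋆}, and ε(p) = {⋆} ∪ {x | p x = ⊤}.) -/
/-- A multi-valued selection function `ε : (X → R) → Finset X` (with outcomes in the
join-semilattice `R`) is *witnessing* if for every indexing function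
`I : X → Finset (X → R)` (with nonempty values) and every
`x ∈ ε (fun x' => ⋁ {P x' | P ∈ I x'})`, there is a choice function `p` for `I`
with `x ∈ ε (fun x' => p x' x')`. -/
def Witnessing {X : Type} {R : Type} [SemilatticeSup R]
    (ε : (X → R) → Finset X) : Prop :=
  ∀ (I : X → Finset (X → R)) (hI : ∀ x, (I x).Nonempty) (x : X),
    x ∈ ε (fun x' => (I x').sup' (hI x') (fun P => P x')) →
      ∃ p : X → X → R, (∀ x', p x' ∈ I x') ∧ x ∈ ε (fun x' => p x' x')

/-- A multi-valued selection function `ε` is *upwards closed* if for every indexing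
function `I` (with nonempty values), every choice function `p` for `I`, and every
`x ∈ ε (fun x' => p x' x')`, one has `x ∈ ε (fun x' => ⋁ {P x' | P ∈ I x'})`. -/
def UpwardsClosed {X : Type} {R : Type} [SemilatticeSup R]
    (ε : (X → R) → Finset X) : Prop :=
  ∀ (I : X → Finset (X → R)) (hI : ∀ x, (I x).Nonempty) (p : X → X → R),
    (∀ x', p x' ∈ I x') → ∀ x, x ∈ ε (fun x' => p x' x') →
      x ∈ ε (fun x' => (I x').sup' (hI x') (fun P => P x'))

/-- There exist a finite join-semilattice `R`, a two-element finite type `X`, and a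
multi-valued selection function `ε` on `X` (with outcomes in `R`) which is upwards
closed but not witnessing. -/
theorem exists_upwardsClosed_not_witnessing :
    ∃ (R : Type) (instR : SemilatticeSup R) (_ : Fintype R)
      (X : Type) (instX : Fintype X),
      @Fintype.card X instX = 2 ∧
      ∃ ε : (X → R) → Finset X,
        (∀ k, (ε k).Nonempty) ∧
        @UpwardsClosed X R instR ε ∧ ¬ @Witnessing X R instR ε := by
  refine ⟨Finset (Fin 2), inferInstance, inferInstance, Bool, inferInstance, by simp, ?_⟩
  refine ⟨fun k => insert true (Finset.univ.filter (fun x => k x = ⊤)), ?_, ?_, ?_⟩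
  · intro k; exact ⟨true, Finset.mem_insert_self _ _⟩
  · intro I hI p hp x hx
    rcases Finset.mem_insert.mp hx with h | h
    · exact Finset.mem_insert.mpr (Or.inl h)
    · refine Finset.mem_insert.mpr (Or.inr ?_)
      rw [Finset.mem_filter] at h ⊢
      refine ⟨Finset.mem_univ _, top_le_iff.mp ?_⟩
      calc (⊤ : Finset (Fin 2)) = p x x := h.2.symm
        _ ≤ _ := Finset.le_sup' (fun P => P x) (hp x)
  · intro hw
    set I : Bool → Finset (Bool → Finset (Fin 2)) :=
      fun _ => {(fun _ => {0}), (fun _ => {1})} with hIdef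
    have hI : ∀ x, (I x).Nonempty := fun x => ⟨_, Finset.mem_insert_self _ _⟩
    have hsup : ∀ x : Bool, (I x).sup' (hI x) (fun P => P x) = ⊤ := by
      intro x
      simp [hIdef]
      decide
    have hmem : false ∈ insert true (Finset.univ.filter
        (fun x => (I x).sup' (hI x) (fun P => P x) = ⊤)) := by
      refine Finset.mem_insert.mpr (Or.inr ?_)
      exact Finset.mem_filter.mpr ⟨Finset.mem_univ _, hsup false⟩
    obtain ⟨p, hp, hfp⟩ := hw I hI false hmem
    rcases Finset.mem_insert.mp hfp with h | h
    · exact Bool.noConfusion h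
    · have h2 : p false false = ⊤ := (Finset.mem_filter.mp h).2
      have := hp false
      rw [hIdef] at this
      rcases Finset.mem_insert.mp this with h3 | h3
      · rw [h3] at h2; revert h2; decide
      · rw [Finset.mem_singleton.mp h3] at h2; revert h2; decide
end

section
/- For every n, every i with 1 ≤ i ≤ n, and every nonempty finite type X, the i-th strict dominance selection function ε_iˢ on X is a multi-valued selection function (its values are nonempty) and is both witnessing and upwards closed, with outcome semilattice R equal to the nonempty finite subsets of ℝⁿ ordered by inclusion with join given by union. -/
/-- The type of nonempty finite subsets of `α`. -/
def NFin (α : Type) : Type := {s : Finset α // s.Nonempty}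

/-- `NFin α` is a join-semilattice, ordered by inclusion with join given by union. -/
noncomputable instance (α : Type) : SemilatticeSup (NFin α) :=
  letI := Classical.decEq α
  Subtype.semilatticeSup (fun _ _ hs _ => hs.mono Finset.subset_union_left)

/-- `S` strictly dominates `T` (for nonempty finite sets of reals) if `min S > max T`. -/
def SDom (S T : NFin ℝ) : Prop :=
  T.1.max' T.2 < S.1.min' S.2

/-- The image of a nonempty finite subset of `ℝⁿ` under the `i`-th projection. -/
noncomputable def projI {n : ℕ} (i : Fin n) (S : NFin (Fin n → ℝ)) : NFin ℝ :=
  ⟨S.1.image (fun v => v i), S.2.image _⟩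

open scoped Classical in
/-- The `i`-th strict dominance selection function:
`ε_iˢ (p) = {x | ∀ x', ¬ (pⁱ x' ≻ pⁱ x)}`. -/
noncomputable def sdSel {n : ℕ} (i : Fin n) (X : Type) [Fintype X]
    (p : X → NFin (Fin n → ℝ)) : Finset X :=
  Finset.univ.filter (fun x => ∀ x' : X, ¬ SDom (projI i (p x')) (projI i (p x)))

/-- The strict dominance selection functions have nonempty values. -/
theorem sdSel_nonempty {n : ℕ} (i : Fin n) (X : Type) [Fintype X] [Nonempty X]
    (p : X → NFin (Fin n → ℝ)) : (sdSel i X p).Nonempty := by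
  classical
  obtain ⟨x, -, hx⟩ := Finset.exists_max_image (Finset.univ : Finset X)
    (fun x => (projI i (p x)).1.max' (projI i (p x)).2) Finset.univ_nonempty
  refine ⟨x, Finset.mem_filter.2 ⟨Finset.mem_univ _, fun x' h => ?_⟩⟩
  have h1 : (projI i (p x')).1.min' (projI i (p x')).2 ≤
      (projI i (p x')).1.max' (projI i (p x')).2 :=
    Finset.min'_le _ _ (Finset.max'_mem _ _)
  have h2 := hx x' (Finset.mem_univ _)
  exact absurd h (by simp only [SDom]; linarith)

lemma mem_NFin_sup {α : Type} {a b : NFin α} {v : α} :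
    v ∈ (a ⊔ b).1 ↔ v ∈ a.1 ∨ v ∈ b.1 := by
  letI := Classical.decEq α
  show v ∈ a.1 ⊔ b.1 ↔ _
  rw [Finset.sup_eq_union]
  exact Finset.mem_union

lemma exists_mem_of_mem_sup' {α β : Type} (s : Finset β) (hs : s.Nonempty)
    (f : β → NFin α) {v : α} (hv : v ∈ (s.sup' hs f).1) : ∃ P ∈ s, v ∈ (f P).1 := by
  revert hv
  refine Finset.sup'_induction hs f (p := fun a => v ∈ a.1 → ∃ P ∈ s, v ∈ (f P).1) ?_ ?_
  · intro a1 h1 a2 h2 hv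
    rcases mem_NFin_sup.1 hv with h | h
    · exact h1 h
    · exact h2 h
  · intro b hb hv
    exact ⟨b, hb, hv⟩

lemma mem_sdSel_iff {n : ℕ} (i : Fin n) (X : Type) [Fintype X]
    (p : X → NFin (Fin n → ℝ)) (x : X) :
    x ∈ sdSel i X p ↔ ∀ x' : X,
      (projI i (p x')).1.min' (projI i (p x')).2 ≤
        (projI i (p x)).1.max' (projI i (p x)).2 := by
  simp only [sdSel, Finset.mem_filter, Finset.mem_univ, true_and, SDom, not_lt]

lemma NFin_sub_sup' {α β : Type} (s : Finset β) (hs : s.Nonempty)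
    (f : β → NFin α) {b : β} (hb : b ∈ s) : (f b).1 ⊆ (s.sup' hs f).1 :=
  Finset.le_sup' f hb

/-- For every `n`, every `i` and every nonempty finite type `X`, the `i`-th strict
dominance selection function on `X` is a multi-valued selection function (its values
are nonempty) and is both witnessing and upwards closed, with outcome semilattice the
nonempty finite subsets of `ℝⁿ` ordered by inclusion with join given by union. -/
theorem sdSel_witnessing_upwardsClosed {n : ℕ} (i : Fin n) (X : Type)
    [Fintype X] [Nonempty X] :
    (∀ p : X → NFin (Fin n → ℝ), (sdSel i X p).Nonempty) ∧
      Witnessing (sdSel i X) ∧ UpwardsClosed (sdSel i X) := by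
  classical
  refine ⟨sdSel_nonempty i X, ?_, ?_⟩
  · -- Witnessing
    intro I hI x hx
    set q : X → NFin (Fin n → ℝ) := fun x' => (I x').sup' (hI x') (fun P => P x') with hq
    rw [mem_sdSel_iff] at hx
    obtain ⟨v0, hv0mem, hv0⟩ :=
      Finset.mem_image.1 ((projI i (q x)).1.max'_mem (projI i (q x)).2)
    obtain ⟨P0, hP0, hvP0⟩ := exists_mem_of_mem_sup' (I x) (hI x) (fun P => P x) hv0mem
    have hmin : ∀ x'' : X, ∃ P ∈ I x'',
        (projI i (P x'')).1.min' (projI i (P x'')).2 ≤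
          (projI i (q x'')).1.min' (projI i (q x'')).2 := by
      intro x''
      obtain ⟨v, hvmem, hv⟩ :=
        Finset.mem_image.1 ((projI i (q x'')).1.min'_mem (projI i (q x'')).2)
      obtain ⟨P, hP, hvP⟩ := exists_mem_of_mem_sup' (I x'') (hI x'') (fun P => P x'') hvmem
      refine ⟨P, hP, ?_⟩
      rw [← hv]
      exact Finset.min'_le _ _ (Finset.mem_image_of_mem _ hvP)
    choose Pm hPm hPmle using hmin
    set p' : X → X → NFin (Fin n → ℝ) := fun x'' => if x'' = x then P0 else Pm x'' with hp'
    have hpx : p' x = P0 := if_pos rfl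
    have hpne : ∀ x'', x'' ≠ x → p' x'' = Pm x'' := fun _ h => if_neg h
    refine ⟨p', fun x'' => ?_, ?_⟩
    · by_cases h : x'' = x
      · rw [h, hpx]; exact hP0
      · rw [hpne _ h]; exact hPm _
    rw [mem_sdSel_iff]
    intro x'
    by_cases h : x' = x
    · subst h
      exact Finset.min'_le _ _ (Finset.max'_mem _ _)
    · rw [hpne _ h]
      have h1 := hPmle x'
      have h2 := hx x'
      have h3 : (projI i (q x)).1.max' (projI i (q x)).2 ≤
          (projI i (p' x x)).1.max' (projI i (p' x x)).2 := by
        rw [hpx, ← hv0]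
        exact Finset.le_max' _ (v0 i) (Finset.mem_image_of_mem (fun v => v i) hvP0)
      linarith
  · -- Upwards closed
    intro I hI p hp x hx
    rw [mem_sdSel_iff] at hx ⊢
    intro x'
    have hsub1 : (projI i (p x' x')).1 ⊆
        (projI i ((I x').sup' (hI x') (fun P => P x'))).1 :=
      Finset.image_subset_image (NFin_sub_sup' (I x') (hI x') (fun P => P x') (hp x'))
    have hsub2 : (projI i (p x x)).1 ⊆
        (projI i ((I x).sup' (hI x) (fun P => P x))).1 :=
      Finset.image_subset_image (NFin_sub_sup' (I x) (hI x) (fun P => P x) (hp x))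
    have h1 := Finset.min'_le _ _
      (hsub1 ((projI i (p x' x')).1.min'_mem (projI i (p x' x')).2))
    have h2 := Finset.le_max' _ _
      (hsub2 ((projI i (p x x)).1.max'_mem (projI i (p x x)).2))
    have h3 := hx x'
    linarith
end
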